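/- arXiv:2012.04091 — 2 statements merged into one kernel-verified Lean document; each statement's English description precedes it below -/
import Mathlib

section
/- The Banzhaf interaction transform is inverted by the formula μ(A) = Σ_{D ⊆ C} (1/2)^{|D|} (−1)^{|D \ A|} I^B(D) for all A ⊆ C, where I^B(A) = (1/2^{|C|−|A|}) Σ_{D ⊆ C\A} Σ_{D' ⊆ A} (−1)^{|A|−|D'|} μ(D' ∪ D). -/
/-!
Regrouping the double sum defining `IB μ D` by the union `S` of its two summation variables gives
`IB μ D = 2^(|D| - m) · ∑_S (-1)^|D \ S| μ S`. The sign vectors `D ↦ (-1)^|D \ S|` are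
orthogonal: writing each sign as a product over `i ∈ D` of `±1`, the sum over all `D` of
`(-1)^|D \ A| (-1)^|D \ S|` factors as `∏_i (1 ± 1)`, which is `2^m` if `S = A` and `0` otherwise.
-/

open Finset

/-- The Banzhaf interaction index of a set function. -/
noncomputable def IB {m : ℕ} (μ : Finset (Fin m) → ℝ) (A : Finset (Fin m)) : ℝ :=
  (1 / 2 ^ (m - A.card)) *
    ∑ D ∈ Aᶜ.powerset, ∑ D' ∈ A.powerset, (-1 : ℝ) ^ (A.card - D'.card) * μ (D' ∪ D)

namespace Finset

variable {α M R : Type*} [DecidableEq α]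

theorem sum_powerset_compl_powerset [Fintype α] [AddCommMonoid M] (s : Finset α)
    (f : Finset α → Finset α → M) :
    ∑ t ∈ sᶜ.powerset, ∑ u ∈ s.powerset, f u t = ∑ S : Finset α, f (S ∩ s) (S \ s) := by
  rw [← sum_product']
  refine sum_nbij' (fun p ↦ p.2 ∪ p.1) (fun S ↦ (S \ s, S ∩ s)) ?_ ?_ ?_ ?_ ?_
  · simp
  · intro S _
    simp only [mem_product, mem_powerset]
    exact ⟨fun i hi ↦ by simp_all, inter_subset_right⟩
  · rintro ⟨t, u⟩ h
    simp only [mem_product, mem_powerset, subset_compl_iff_disjoint_right] at h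
    ext1 <;> ext i <;> simp only [mem_sdiff, mem_inter, mem_union] <;>
      grind [disjoint_left]
  · intro S _
    ext i; simp only [mem_union, mem_inter, mem_sdiff]; tauto
  · rintro ⟨t, u⟩ h
    simp only [mem_product, mem_powerset, subset_compl_iff_disjoint_right] at h
    congr 1 <;> ext i <;> simp only [mem_sdiff, mem_inter, mem_union] <;>
      grind [disjoint_left]

theorem neg_one_pow_card_sdiff [CommRing R] (D A : Finset α) :
    (-1 : R) ^ (D \ A).card = ∏ i ∈ D, if i ∈ A then 1 else -1 := by
  rw [prod_ite, prod_const_one, prod_const, one_mul, sdiff_eq_filter]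

theorem sum_neg_one_pow_card_sdiff_mul [Fintype α] [CommRing R] (A S : Finset α) :
    ∑ D : Finset α, (-1 : R) ^ (D \ A).card * (-1 : R) ^ (D \ S).card
      = if S = A then 2 ^ Fintype.card α else 0 := by
  simp_rw [neg_one_pow_card_sdiff, ← prod_mul_distrib, ← powerset_univ, ← prod_one_add]
  split_ifs with h
  · subst h
    rw [Fintype.card, ← prod_const]
    refine prod_congr rfl fun i _ ↦ ?_
    split_ifs <;> norm_num
  · obtain ⟨i, hi⟩ : ∃ i, ¬(i ∈ A ↔ i ∈ S) := by
      by_contra! hc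
      exact h (ext fun i ↦ (hc i).symm)
    apply prod_eq_zero (mem_univ i)
    by_cases hA : i ∈ A <;> by_cases hS : i ∈ S <;> simp_all

end Finset

theorem IB_eq_sum {m : ℕ} (μ : Finset (Fin m) → ℝ) (D : Finset (Fin m)) :
    IB μ D = (1 / 2) ^ (m - D.card) * ∑ S, (-1 : ℝ) ^ (D \ S).card * μ S := by
  rw [IB, sum_powerset_compl_powerset, one_div_pow]
  congr 1
  refine sum_congr rfl fun S _ ↦ ?_
  rw [union_comm, sdiff_union_inter, ← card_sdiff_of_subset inter_subset_right,
    sdiff_inter_self_right]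

theorem banzhaf_inversion {m : ℕ} (μ : Finset (Fin m) → ℝ) (A : Finset (Fin m)) :
    μ A = ∑ D : Finset (Fin m), (1 / 2 : ℝ) ^ D.card * (-1 : ℝ) ^ (D \ A).card * IB μ D := by
  have half_pow (D : Finset (Fin m)) :
      (1 / 2 : ℝ) ^ D.card * (1 / 2) ^ (m - D.card) = (1 / 2) ^ m := by
    rw [← pow_add, Nat.add_sub_cancel' (by simpa using card_le_univ D)]
  calc μ A = ∑ S, (if S = A then (1 / 2 : ℝ) ^ m * 2 ^ m else 0) * μ S := by
        simp
    _ = ∑ S, ∑ D, (1 / 2 : ℝ) ^ m * ((-1) ^ (D \ A).card * (-1) ^ (D \ S).card) * μ S := by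
        simp_rw [← sum_mul, ← mul_sum, sum_neg_one_pow_card_sdiff_mul, Fintype.card_fin, mul_ite,
          mul_zero]
    _ = ∑ D, (1 / 2 : ℝ) ^ D.card * (-1) ^ (D \ A).card * IB μ D := by
        rw [sum_comm]
        refine sum_congr rfl fun D _ ↦ ?_
        rw [IB_eq_sum, ← half_pow D, mul_sum, mul_sum]
        exact sum_congr rfl fun S _ ↦ by ring
end

section
/- The Banzhaf interaction index equals the scaled sum of Möbius coefficients of supersets: I^B(A) = Σ_{B ⊇ A} (1/2)^{|B\A|} m(B), where m is the Möbius transform of μ. -/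
open Finset

/-- The Möbius transform of a set function. -/
def moebius {m : ℕ} (μ : Finset (Fin m) → ℝ) (A : Finset (Fin m)) : ℝ :=
  ∑ D ∈ A.powerset, (-1 : ℝ) ^ (A \ D).card * μ D

/-! Both sides are linear in `μ`, so it suffices to compare the coefficients of each `μ E`.
On the left, `E` arises exactly once as `D' ∪ D` with `D' = E ∩ A`, `D = E \ A`, with coefficient
`2^{-(m-|A|)} (-1)^{|A \ E|}`. On the right it is `∑_{B ⊇ A ∪ E} 2^{-|B \ A|} (-1)^{|B \ E|}`;
writing `B = A ∪ E ∪ T` with `T` disjoint from `A ∪ E`, this factors as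
`2^{-|E \ A|} (-1)^{|A \ E|} (1 - 1/2)^{m - |A ∪ E|}`, the same number. -/

theorem sum_powerset_pow_card {α R : Type*} [CommSemiring R] (x : R) (s : Finset α) :
    ∑ t ∈ s.powerset, x ^ t.card = (x + 1) ^ s.card := by
  classical
  simpa using sum_pow_mul_eq_add_pow x 1 s

section

variable {α : Type*} [DecidableEq α]

theorem card_union_union_sdiff_left {A E T : Finset α} (h : Disjoint (A ∪ E) T) :
    ((A ∪ E ∪ T) \ A).card = (E \ A).card + T.card := by
  rw [← card_union_of_disjoint (disjoint_of_subset_left (sdiff_subset.trans subset_union_right) h)]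
  congr 1
  ext x
  grind [disjoint_left]

variable [Fintype α]

theorem sum_powerset_compl_sum_powerset {M : Type*} [AddCommMonoid M]
    (A : Finset α) (f : Finset α → Finset α → M) :
    ∑ D ∈ Aᶜ.powerset, ∑ D' ∈ A.powerset, f D' D = ∑ E, f (E ∩ A) (E \ A) := by
  have split : ∀ D ⊆ Aᶜ, ∀ D' ⊆ A, (D' ∪ D) \ A = D ∧ (D' ∪ D) ∩ A = D' := by
    intro D hD D' hD'
    constructor <;> ext x <;> grind [mem_compl]
  rw [← sum_product']
  refine sum_nbij' (fun p => p.2 ∪ p.1) (fun E => (E \ A, E ∩ A)) ?_ ?_ ?_ ?_ ?_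
  all_goals simp only [mem_univ, mem_product, mem_powerset, forall_const, Prod.forall,
    implies_true, Prod.mk.injEq, and_imp]
  · exact fun E => ⟨fun x hx => mem_compl.2 (mem_sdiff.1 hx).2, inter_subset_right⟩
  · exact fun D D' hD hD' => split D hD D' hD'
  · exact fun E => by rw [union_comm, sdiff_union_inter]
  · intro D D' hD hD'
    rw [(split D hD D' hD').1, (split D hD D' hD').2]

theorem sum_filter_superset_sum_powerset_comm {M : Type*} [AddCommMonoid M]
    (A : Finset α) (f : Finset α → Finset α → M) :
    ∑ B ∈ univ.filter (A ⊆ ·), ∑ D ∈ B.powerset, f B D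
      = ∑ D, ∑ B ∈ univ.filter (A ∪ D ⊆ ·), f B D :=
  sum_comm' fun B D => by simp [union_subset_iff]

theorem sum_filter_superset_eq_sum_powerset_compl {M : Type*} [AddCommMonoid M]
    (S : Finset α) (g : Finset α → M) :
    ∑ B ∈ univ.filter (S ⊆ ·), g B = ∑ T ∈ Sᶜ.powerset, g (S ∪ T) := by
  refine sum_nbij' (· \ S) (S ∪ ·) ?_ ?_ ?_ ?_ ?_ <;> intro B hB <;>
    simp only [mem_filter, mem_univ, true_and, mem_powerset] at hB ⊢
  · exact fun x hx => mem_compl.2 (mem_sdiff.1 hx).2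
  · exact subset_union_left
  · exact union_sdiff_of_subset hB
  · exact union_sdiff_cancel_left (disjoint_of_subset_right hB disjoint_compl_right)
  · rw [union_sdiff_of_subset hB]

theorem sum_filter_superset_pow_card_sdiff_mul_pow_card_sdiff {R : Type*} [CommSemiring R]
    (x y : R) (A E : Finset α) :
    ∑ B ∈ univ.filter (A ∪ E ⊆ ·), x ^ (B \ A).card * y ^ (B \ E).card
      = x ^ (E \ A).card * y ^ (A \ E).card * (x * y + 1) ^ (Fintype.card α - (A ∪ E).card) := by
  rw [sum_filter_superset_eq_sum_powerset_compl, ← card_compl, ← sum_powerset_pow_card, mul_sum]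
  refine sum_congr rfl fun T hT => ?_
  have h : Disjoint (A ∪ E) T := disjoint_of_subset_right (mem_powerset.1 hT) disjoint_compl_right
  rw [card_union_union_sdiff_left h, union_comm A E,
    card_union_union_sdiff_left (union_comm A E ▸ h), pow_add, pow_add, mul_pow]
  ring

theorem sum_filter_superset_half_pow_mul_neg_one_pow (A E : Finset α) :
    ∑ B ∈ univ.filter (A ∪ E ⊆ ·), (1 / 2 : ℝ) ^ (B \ A).card * (-1) ^ (B \ E).card
      = (1 / 2) ^ (Fintype.card α - A.card) * (-1) ^ (A \ E).card := by
  have hcard : (E \ A).card + (Fintype.card α - (A ∪ E).card) = Fintype.card α - A.card := by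
    have := card_le_univ (A ∪ E)
    have := union_comm E A ▸ card_sdiff_add_card E A
    omega
  have half : (1 / 2 : ℝ) * -1 + 1 = 1 / 2 := by norm_num
  rw [sum_filter_superset_pow_card_sdiff_mul_pow_card_sdiff, half, ← hcard, pow_add]
  ring

end

theorem IB_eq_sum_moebius_supersets {m : ℕ} (μ : Finset (Fin m) → ℝ)
    (A : Finset (Fin m)) :
    IB μ A = ∑ B ∈ (univ : Finset (Finset (Fin m))).filter (fun B => A ⊆ B),
      (1 / 2 : ℝ) ^ (B \ A).card * moebius μ B := by
  have lhs : ∑ D ∈ Aᶜ.powerset, ∑ D' ∈ A.powerset, (-1 : ℝ) ^ (A.card - D'.card) * μ (D' ∪ D)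
      = ∑ E, (-1) ^ (A \ E).card * μ E := by
    rw [sum_powerset_compl_sum_powerset]
    refine sum_congr rfl fun E _ => ?_
    rw [← card_sdiff, union_comm, sdiff_union_inter]
  have rhs : ∑ B ∈ univ.filter (A ⊆ ·), (1 / 2 : ℝ) ^ (B \ A).card * moebius μ B
      = ∑ E, (1 / 2) ^ (m - A.card) * (-1) ^ (A \ E).card * μ E := by
    simp only [moebius, mul_sum, ← mul_assoc]
    rw [sum_filter_superset_sum_powerset_comm]
    refine sum_congr rfl fun E _ => ?_
    rw [← sum_mul, sum_filter_superset_half_pow_mul_neg_one_pow, Fintype.card_fin]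
  rw [IB, lhs, rhs, mul_sum]
  simp only [one_div_pow, mul_assoc]
end
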